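/- Soundness of axiom (uA): for any LEI-model M and world w, if both [φ]ψ and [φ]¬ψ are true at w under the LEI update semantics, then φ → (p ∧ ¬p) is true at w (equivalently, φ is not true at w). -/
import Mathlib


/-- Three truth values of strong Kleene logic: `f` (0), `n` (∅), `t` (1). -/
inductive TV where
  | f : TV
  | n : TV
  | t : TV
deriving DecidableEq

/-- Kleene negation: swaps 1 and 0, fixes ∅. -/
def TV.neg : TV → TV
  | .t => .f
  | .n => .n
  | .f => .t

/-- Kleene conjunction: minimum under 0 < ∅ < 1. -/
def TV.and : TV → TV → TV
  | .t, b => b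
  | .n, .t => .n
  | .n, b => b
  | .f, _ => .f

/-- Kleene disjunction: maximum under 0 < ∅ < 1. -/
def TV.or : TV → TV → TV
  | .f, b => b
  | .n, .f => .n
  | .n, b => b
  | .t, _ => .t

/-- Two-valued implication: value 1 unless the antecedent is 1 and the consequent is not. -/
def TV.imp : TV → TV → TV
  | .t, .t => .t
  | .t, _ => .f
  | _, _ => .t

/-- Modal formulas of LEI: atoms, ¬, ∧, ∨, → and the ignorance operator I. -/
inductive MForm where
  | atom : ℕ → MForm
  | neg : MForm → MForm
  | conj : MForm → MForm → MForm
  | disj : MForm → MForm → MForm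
  | impl : MForm → MForm → MForm
  | ig : MForm → MForm

/-- A LEI-model: a Kripke frame with a three-valued atomic valuation. -/
structure LEIModel (W : Type) where
  R : W → W → Prop
  V : ℕ → W → TV

open Classical in
/-- Three-valued evaluation in a LEI-model: strong Kleene clauses for ¬, ∧, ∨,
two-valued implication, and `I φ` is `t` at `w` iff `φ` is `t` at `w` and `φ` is not `t`
at any accessible world distinct from `w`; otherwise `I φ` is `f`. -/
noncomputable def val {W : Type} (M : LEIModel W) : MForm → W → TV
  | .atom k, w => M.V k w
  | .neg φ, w => (val M φ w).neg
  | .conj φ ψ, w => (val M φ w).and (val M ψ w)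
  | .disj φ ψ, w => (val M φ w).or (val M ψ w)
  | .impl φ ψ, w => (val M φ w).imp (val M ψ w)
  | .ig φ, w =>
      if val M φ w = TV.t ∧ ∀ w', w' ≠ w → M.R w w' → val M φ w' ≠ TV.t then TV.t
      else TV.f

/-- The set of formulas true at world `w` of model `M`. -/
def Th {W : Type} (M : LEIModel W) (w : W) : Set MForm := {χ | val M χ w = TV.t}

/-- `Cn φ`: the class of all semantic consequences of `φ` (over all LEI-models). -/
def Cn (φ : MForm) : Set MForm :=
  {ψ | ∀ (W : Type) (M : LEIModel W) (w : W), val M φ w = TV.t → val M ψ w = TV.t}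

/-- A set of formulas is consistent when it contains no formula together with its negation. -/
def SetConsistent (S : Set MForm) : Prop := ∀ ψ, ¬(ψ ∈ S ∧ MForm.neg ψ ∈ S)

/-- The LEI update of `M` at `w`: a fresh world (`Sum.inr ()`) is added, with edges from
`w` to the fresh world, and from the fresh world to every world accessible from `w`;
all old worlds, edges and valuations are kept; the fresh world's atomic valuation is
`Vnew`. -/
noncomputable def upd {W : Type} (M : LEIModel W) (w : W) (Vnew : ℕ → TV) :
    LEIModel (W ⊕ Unit) where
  R x y :=
    match x, y with
    | Sum.inl a, Sum.inl b => M.R a b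
    | Sum.inl a, Sum.inr _ => a = w
    | Sum.inr _, Sum.inl b => M.R w b
    | Sum.inr _, Sum.inr _ => False
  V k x :=
    match x with
    | Sum.inl a => M.V k a
    | Sum.inr _ => Vnew k

/-- Soundness of axiom (uA): if both [φ]ψ and [φ]¬ψ are true at `w` (i.e. consistency of
Cn(φ) ∪ {χ : M,w ⊨ χ} implies that ψ, respectively ¬ψ, holds at `w` in the updated
model), then φ → (p ∧ ¬p) is true at `w`. -/
theorem stmt16 {W : Type} (M : LEIModel W) (w : W) (φ ψ : MForm) (Vnew : ℕ → TV)
    (h1 : SetConsistent (Cn φ ∪ Th M w) → val (upd M w Vnew) ψ (Sum.inl w) = TV.t)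
    (h2 : SetConsistent (Cn φ ∪ Th M w) → val (upd M w Vnew) (.neg ψ) (Sum.inl w) = TV.t) :
    val M (.impl φ (.conj (.atom 0) (.neg (.atom 0)))) w = TV.t := by
  have hnc : ¬ SetConsistent (Cn φ ∪ Th M w) := by
    intro hc
    have e1 := h1 hc
    have e2 := h2 hc
    simp only [val] at e2
    rw [e1] at e2
    exact absurd e2 (by decide)
  have hφ : val M φ w ≠ TV.t := by
    intro ht
    apply hnc
    intro χ hχ
    rcases hχ with ⟨ha, hb⟩
    have hta : val M χ w = TV.t := by
      rcases ha with h | h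
      · exact h W M w ht
      · exact h
    have htb : val M (.neg χ) w = TV.t := by
      rcases hb with h | h
      · exact h W M w ht
      · exact h
    simp only [val, hta] at htb
    exact absurd htb (by decide)
  simp only [val]
  cases h : val M φ w <;> simp_all [TV.imp]
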